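/- Theorem: Let J and J' be Jordan rings, J 2-torsion free with a nontrivial idempotent e and Peirce decomposition J = J₁ ⊕ J_{1/2} ⊕ J₀. Suppose (i) for a_i ∈ J_i (i = 1, 0), t a_i = 0 for all t ∈ J_{1/2} implies a_i = 0; (ii) for a₀ ∈ J₀, t a₀ = 0 for all t ∈ J₀ implies a₀ = 0; (iii) for a ∈ J_{1/2}, t a = 0 for all t ∈ J₀ implies a = 0. Then every n-multiplicative isomorphism φ : J → J' (n ≥ 2) is additive: φ(a + b) = φ(a) + φ(b) for all a, b ∈ J. -/

import Mathlib

/-- Peirce 1-component relative to `e`: elements `x` with `e*x = x`. -/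
def peirce1 {J : Type*} [Mul J] (e : J) : Set J := {x | e * x = x}

/-- Peirce 1/2-component relative to `e`: elements `x` with `e*x = (1/2)x`, i.e. `e*x + e*x = x`. -/
def peirceHalf {J : Type*} [Mul J] [Add J] (e : J) : Set J := {x | e * x + e * x = x}

/-- Peirce 0-component relative to `e`: elements `x` with `e*x = 0`. -/
def peirce0 {J : Type*} [Mul J] [Zero J] (e : J) : Set J := {x | e * x = 0}

/-- The right-normed nonassociative monomial `x₁(x₂(⋯(x_{n-1}x_n)⋯))` on a list of arguments. -/
def rnm {J : Type*} [Mul J] [Zero J] : List J → J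
  | [] => 0
  | [x] => x
  | x :: y :: l => x * rnm (y :: l)

/-- `φ` is an `n`-multiplicative map (w.r.t. the right-normed monomial of degree `n`). -/
def IsNMulMap {J J' : Type*} [Mul J] [Zero J] [Mul J'] [Zero J'] (n : ℕ) (φ : J → J') : Prop :=
  ∀ l : List J, l.length = n → φ (rnm l) = rnm (l.map φ)

/-!
Write `n = k + 2`, `L = L_e` and `x = x₁ + x_{1/2} + x₀` for the Peirce decomposition. Since `φ`
is multiplicative on right-normed monomials of degree `n`, and these are additive in their last
slot, every operator `x ↦ p₁(p₂(⋯(p_{n-1} x)))`, and every composite of such operators, turns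
`φ c = φ a + φ b` into `φ (T c) = φ (T a) + φ (T b)`. For `s ∈ J₀` the operator
`x ↦ L^{2k+1}(s x)` equals `x ↦ s L^{2k+1} x_{1/2}`; hence, where `φ` is additive on the elements
of `s J_{1/2}` involved, injectivity and (iii) give `(T c)_{1/2} = (T a)_{1/2} + (T b)_{1/2}`.
The tests `T = id`, `x ↦ t L^{2k+1} x` and `x ↦ L^{k-1}(t (s x))` (`t ∈ J_{1/2}`, `s ∈ J₀`) have
`J_{1/2}`-components `x_{1/2}`, `t x₁` and `L^{k-1}(t (s x₀))`, so (i) and (ii) force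
`c = a + b`.

Additivity of `φ` on `s J_{1/2}` is bootstrapped: the argument first gives
`φ (e + η) = φ e + φ η` for `η ∈ J_{1/2}`, where one of the two probed terms always vanishes, and
transporting this through `x ↦ L^{2k+1}(s ((ξ + e) L^k x))`, which sends `e` to `s L^{2k+2} ξ`
and `η` to `s L^{3k+2} η`, gives `φ (s γ + s δ) = φ (s γ) + φ (s δ)`.
-/

open AddMonoid.End

section MulLeftPow

variable {R : Type*} [NonUnitalNonAssocSemiring R] {a : R}

theorem mulLeft_pow_succ_apply (m : ℕ) (x : R) :
    (mulLeft a ^ (m + 1)) x = (mulLeft a ^ m) (a * x) := by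
  rw [pow_succ]; rfl

theorem mulLeft_pow_succ_apply' (m : ℕ) (x : R) :
    (mulLeft a ^ (m + 1)) x = a * (mulLeft a ^ m) x := by
  rw [pow_succ']; rfl

theorem mulLeft_pow_apply_mulLeft_pow_apply (m m' : ℕ) (x : R) :
    (mulLeft a ^ m) ((mulLeft a ^ m') x) = (mulLeft a ^ (m + m')) x := by
  rw [pow_add]; rfl

end MulLeftPow

theorem eq_of_add_self_eq_add_self {G : Type*} [AddCommGroup G]
    (h2 : ∀ x : G, x + x = 0 → x = 0) {a b : G} (h : a + a = b + b) : a = b :=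
  sub_eq_zero.mp <| h2 _ <| by rw [sub_add_sub_comm, h, sub_self]

theorem jordan_identity {A : Type*} [CommMagma A] [IsCommJordan A] (x y : A) :
    x * x * y * x = x * x * (y * x) :=
  calc x * x * y * x = x * (y * (x * x)) := by rw [mul_comm _ x, mul_comm (x * x) y]
    _ = x * y * (x * x) := (IsCommJordan.lmul_comm_rmul_rmul x y).symm
    _ = x * x * (y * x) := by rw [mul_comm, mul_comm x y]

theorem isCommJordan_of_jordan_identity {A : Type*} [CommMagma A]
    (h : ∀ x y : A, x * x * y * x = x * x * (y * x)) : IsCommJordan A where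
  lmul_comm_rmul_rmul x y :=
    calc x * y * (x * x) = x * x * (y * x) := by rw [mul_comm, mul_comm x y]
      _ = x * x * y * x := (h x y).symm
      _ = x * (y * (x * x)) := by rw [mul_comm _ x, mul_comm (x * x) y]

section Peirce

variable {J : Type*} [NonUnitalNonAssocCommRing J] {e : J}

-- `L_e (2 L_e - 1) (L_e - 1) = 0` by `mulLeft_cubic_of_idem`, so these polynomials in `L_e` are
-- the projections onto `J₁`, `J_{1/2}`, `J₀`.
def peirceProj1 (e : J) : AddMonoid.End J := 2 • mulLeft e ^ 2 - mulLeft e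
def peirceProjHalf (e : J) : AddMonoid.End J := 4 • (mulLeft e - mulLeft e ^ 2)
def peirceProj0 (e : J) : AddMonoid.End J := 1 - 3 • mulLeft e + 2 • mulLeft e ^ 2

theorem mem_peirce1 {x : J} : x ∈ peirce1 e ↔ e * x = x := Iff.rfl
theorem mem_peirceHalf {x : J} : x ∈ peirceHalf e ↔ e * x + e * x = x := Iff.rfl
theorem mem_peirce0 {x : J} : x ∈ peirce0 e ↔ e * x = 0 := Iff.rfl

theorem peirceProj1_apply (x : J) : peirceProj1 e x = 2 • (e * (e * x)) - e * x := rfl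
theorem peirceProjHalf_apply (x : J) : peirceProjHalf e x = 4 • (e * x - e * (e * x)) := rfl
theorem peirceProj0_apply (x : J) : peirceProj0 e x = x - 3 • (e * x) + 2 • (e * (e * x)) := rfl

theorem peirceProj1_add_peirceProjHalf_add_peirceProj0 (x : J) :
    peirceProj1 e x + peirceProjHalf e x + peirceProj0 e x = x := by
  rw [peirceProj1_apply, peirceProjHalf_apply, peirceProj0_apply]
  abel

theorem peirceProjHalf_eq_zero_of_mem_peirce1 {x : J} (hx : x ∈ peirce1 e) :
    peirceProjHalf e x = 0 := by
  rw [peirceProjHalf_apply, hx, hx, sub_self, smul_zero]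

theorem peirceProj0_eq_zero_of_mem_peirce1 {x : J} (hx : x ∈ peirce1 e) :
    peirceProj0 e x = 0 := by
  rw [peirceProj0_apply, hx, hx]
  abel

theorem peirceProj1_eq_zero_of_mem_peirceHalf {x : J} (hx : x ∈ peirceHalf e) :
    peirceProj1 e x = 0 := by
  rw [peirceProj1_apply, two_nsmul, ← mul_add, hx, sub_self]

theorem peirceProjHalf_eq_self_of_mem_peirceHalf {x : J} (hx : x ∈ peirceHalf e) :
    peirceProjHalf e x = x := by
  have hx' : e * (e * x) + e * (e * x) = e * x := by rw [← mul_add, hx]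
  rw [mem_peirceHalf] at hx
  rw [peirceProjHalf_apply]
  linear_combination (norm := abel) hx - hx' - hx'

theorem self_mul_mem_peirceHalf {x : J} (hx : x ∈ peirceHalf e) : e * x ∈ peirceHalf e := by
  rw [mem_peirceHalf, ← mul_add, hx]

theorem nsmul_mem_peirceHalf {t : J} (ht : t ∈ peirceHalf e) (n : ℕ) :
    n • t ∈ peirceHalf e := by
  rw [mem_peirceHalf, mul_smul_comm, ← smul_add, ht]

theorem mulLeft_pow_apply_of_mem_peirce1 {u : J} (hu : u ∈ peirce1 e) (m : ℕ) :
    (mulLeft e ^ m) u = u := by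
  induction m with
  | zero => rfl
  | succ m ih => rw [mulLeft_pow_succ_apply, hu, ih]

theorem mulLeft_pow_succ_apply_of_mem_peirce0 {w : J} (hw : w ∈ peirce0 e) (m : ℕ) :
    (mulLeft e ^ (m + 1)) w = 0 := by
  rw [mulLeft_pow_succ_apply, hw, map_zero]

theorem mulLeft_pow_apply_mem_peirceHalf {t : J} (ht : t ∈ peirceHalf e) (m : ℕ) :
    (mulLeft e ^ m) t ∈ peirceHalf e := by
  induction m with
  | zero => exact ht
  | succ m ih => rw [mulLeft_pow_succ_apply']; exact self_mul_mem_peirceHalf ih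

theorem two_pow_nsmul_mulLeft_pow_apply {t : J} (ht : t ∈ peirceHalf e) (m : ℕ) :
    2 ^ m • (mulLeft e ^ m) t = t := by
  induction m generalizing t with
  | zero => rw [pow_zero, one_smul]; rfl
  | succ m ih =>
    rw [mulLeft_pow_succ_apply, pow_succ, mul_smul, ← map_nsmul, two_nsmul, ht, ih ht]

theorem mulLeft_pow_apply_two_pow_nsmul {t : J} (ht : t ∈ peirceHalf e) (m : ℕ) :
    (mulLeft e ^ m) (2 ^ m • t) = t := by
  rw [map_nsmul, two_pow_nsmul_mulLeft_pow_apply ht]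

theorem eq_zero_of_mulLeft_pow_apply_eq_zero {t : J} (ht : t ∈ peirceHalf e) {m : ℕ}
    (h : (mulLeft e ^ m) t = 0) : t = 0 := by
  rw [← two_pow_nsmul_mulLeft_pow_apply ht m, h, smul_zero]

theorem peirceProjHalf_mulLeft_pow_apply (m : ℕ) (x : J) :
    peirceProjHalf e ((mulLeft e ^ m) x) = (mulLeft e ^ m) (peirceProjHalf e x) := by
  have : Commute (mulLeft e ^ m) (peirceProjHalf e) :=
    (((Commute.refl _).sub_right ((Commute.refl _).pow_right 2)).smul_right 4).pow_left m
  exact DFunLike.congr_fun this.eq.symm x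

theorem IsIdempotentElem.add_mul_self_eq (he : IsIdempotentElem e) (z : J) :
    (e + z) * (e + z) = e + (e * z + e * z + z * z) := by
  rw [add_mul, mul_add, mul_add, he.eq, mul_comm z e]; abel

theorem IsIdempotentElem.sub_mul_self_eq (he : IsIdempotentElem e) (z : J) :
    (e - z) * (e - z) = e + (z * z - (e * z + e * z)) := by
  rw [sub_mul, mul_sub, mul_sub, he.eq, mul_comm z e]; abel

section Jordan

variable [IsCommJordan J] (h2 : ∀ x : J, x + x = 0 → x = 0) (he : IsIdempotentElem e)
include h2 he

-- The parts of the Jordan identity at `x = e ± z` that are odd and even in `z`, halved.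
theorem jordan_linear_at_idem (y z : J) :
    e * y * z + (e * z * y * e + e * z * y * e) =
      e * (y * z) + (e * z * (y * e) + e * z * (y * e)) := by
  apply eq_of_add_self_eq_add_self h2
  have h₁ := jordan_identity (e + z) y
  have h₂ := jordan_identity (e - z) y
  have h₃ := jordan_identity z y
  rw [he.add_mul_self_eq] at h₁
  rw [he.sub_mul_self_eq] at h₂
  simp only [add_mul, mul_add, sub_mul, mul_sub] at h₁ h₂
  linear_combination (norm := abel) h₁ - h₂ - h₃ - h₃

theorem jordan_quadratic_at_idem (y z : J) :
    e * z * y * z + e * z * y * z + z * z * y * e =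
      e * z * (y * z) + e * z * (y * z) + z * z * (y * e) := by
  apply eq_of_add_self_eq_add_self h2
  have h₁ := jordan_identity (e + z) y
  have h₂ := jordan_identity (e - z) y
  have h₀ := jordan_identity e y
  rw [he.add_mul_self_eq] at h₁
  rw [he.sub_mul_self_eq] at h₂
  rw [he.eq] at h₀
  simp only [add_mul, mul_add, sub_mul, mul_sub] at h₁ h₂
  linear_combination (norm := abel) h₁ + h₂ - h₀ - h₀

theorem mulLeft_cubic_of_idem (z : J) :
    e * z + (e * (e * (e * z)) + e * (e * (e * z))) =
      e * (e * z) + (e * (e * z) + e * (e * z)) := by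
  have h := jordan_linear_at_idem h2 he e z
  rwa [he.eq, mul_comm (e * z) e, mul_comm (e * (e * z)) e] at h

theorem peirceProj1_mem (x : J) : peirceProj1 e x ∈ peirce1 e := by
  rw [mem_peirce1, peirceProj1_apply, mul_sub, mul_smul_comm]
  linear_combination (norm := abel) mulLeft_cubic_of_idem h2 he x

theorem peirceProjHalf_mem (x : J) : peirceProjHalf e x ∈ peirceHalf e := by
  rw [mem_peirceHalf, peirceProjHalf_apply, mul_smul_comm, mul_sub]
  linear_combination (norm := abel) -(4 • mulLeft_cubic_of_idem h2 he x)

theorem peirceProj0_mem (x : J) : peirceProj0 e x ∈ peirce0 e := by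
  rw [mem_peirce0, peirceProj0_apply, mul_add, mul_sub, mul_smul_comm, mul_smul_comm]
  linear_combination (norm := abel) mulLeft_cubic_of_idem h2 he x

theorem mul_eq_zero_of_mem_peirce1_of_mem_peirce0 {u w : J} (hu : u ∈ peirce1 e)
    (hw : w ∈ peirce0 e) : u * w = 0 := by
  rw [mem_peirce1] at hu
  rw [mem_peirce0] at hw
  have h1 := jordan_linear_at_idem h2 he w u
  rw [hw, hu, zero_mul, mul_comm w e, hw, mul_zero, mul_comm (u * w) e, mul_comm w u] at h1
  have hL : e * (u * w) = 0 := by linear_combination (norm := abel) h1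
  have h3 := jordan_linear_at_idem h2 he u w
  rw [hw, hu, zero_mul, zero_mul, mul_comm u e, hu, hL] at h3
  simpa using h3

theorem mul_mem_peirceHalf_of_mem_peirce1 {t u : J} (ht : t ∈ peirceHalf e)
    (hu : u ∈ peirce1 e) : t * u ∈ peirceHalf e := by
  rw [mem_peirceHalf] at ht ⊢
  rw [mem_peirce1] at hu
  have h := jordan_linear_at_idem h2 he t u
  rw [hu, mul_comm u t, mul_comm (t * u) e, mul_comm t e] at h
  have d1 : e * t * u + e * t * u = t * u := by rw [← add_mul, ht]
  have d2 : u * (e * t) + u * (e * t) = t * u := by rw [← mul_add, ht, mul_comm]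
  linear_combination (norm := abel) h + h - d1 + d2 + d2

theorem mul_mem_peirceHalf_of_mem_peirce0 {w t : J} (hw : w ∈ peirce0 e)
    (ht : t ∈ peirceHalf e) : w * t ∈ peirceHalf e := by
  rw [mem_peirceHalf] at ht ⊢
  rw [mem_peirce0] at hw
  have h := jordan_linear_at_idem h2 he t w
  rw [hw, zero_mul, zero_mul, zero_mul, mul_comm t w] at h
  have d1 : e * t * w + e * t * w = w * t := by rw [← add_mul, ht, mul_comm]
  linear_combination (norm := abel) d1 - h - h

theorem mul_mem_peirce0 {w w' : J} (hw : w ∈ peirce0 e) (hw' : w' ∈ peirce0 e) :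
    w * w' ∈ peirce0 e := by
  rw [mem_peirce0] at hw hw' ⊢
  have h := jordan_linear_at_idem h2 he w w'
  rw [hw, hw', zero_mul, zero_mul, zero_mul, mul_comm w e, hw, mul_zero] at h
  linear_combination (norm := abel) -h

theorem mul_mem_peirceHalf_of_mem_peirce0' {t w : J} (ht : t ∈ peirceHalf e)
    (hw : w ∈ peirce0 e) : t * w ∈ peirceHalf e :=
  mul_comm w t ▸ mul_mem_peirceHalf_of_mem_peirce0 h2 he hw ht

theorem mulLeft_mulLeft_mul_self_of_mem_peirceHalf {t : J} (ht : t ∈ peirceHalf e) :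
    e * (e * (t * t)) = e * (t * t) := by
  rw [mem_peirceHalf] at ht
  have h := jordan_quadratic_at_idem h2 he e t
  rw [he.eq, mul_comm (e * t) e, mul_comm (t * t) e, mul_comm (e * (t * t)) e] at h
  have d1 : e * (e * t) + e * (e * t) = e * t := by rw [← mul_add, ht]
  have d2 : e * (e * t) * t + e * (e * t) * t = e * t * t := by rw [← add_mul, d1]
  have d3 : e * t * (e * t) + e * t * (e * t) = e * t * t := by rw [← mul_add, ht]
  linear_combination (norm := abel) h - d2 + d3

theorem peirceProjHalf_mul_eq_zero {t s : J} (ht : t ∈ peirceHalf e) (hs : s ∈ peirceHalf e) :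
    peirceProjHalf e (t * s) = 0 := by
  have hts : t + s ∈ peirceHalf e := by
    rw [mem_peirceHalf] at ht hs ⊢
    rw [mul_add]
    linear_combination (norm := abel) ht + hs
  have h := mulLeft_mulLeft_mul_self_of_mem_peirceHalf h2 he hts
  have h₁ := mulLeft_mulLeft_mul_self_of_mem_peirceHalf h2 he ht
  have h₂ := mulLeft_mulLeft_mul_self_of_mem_peirceHalf h2 he hs
  simp only [add_mul, mul_add, mul_comm s t] at h
  have : e * (e * (t * s)) = e * (t * s) := by
    apply eq_of_add_self_eq_add_self h2
    linear_combination (norm := abel) h - h₁ - h₂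
  rw [peirceProjHalf_apply, this, sub_self, smul_zero]

theorem mulLeft_pow_apply_mul_of_mem_peirce0 {s t : J} (hs : s ∈ peirce0 e)
    (ht : t ∈ peirceHalf e) (m : ℕ) : (mulLeft e ^ m) (s * t) = s * (mulLeft e ^ m) t := by
  induction m with
  | zero => rfl
  | succ m ih =>
    have ht' := mulLeft_pow_apply_mem_peirceHalf ht m
    rw [mulLeft_pow_succ_apply', mulLeft_pow_succ_apply', ih]
    apply eq_of_add_self_eq_add_self h2
    rw [mem_peirceHalf.mp (mul_mem_peirceHalf_of_mem_peirce0 h2 he hs ht'), ← mul_add,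
      mem_peirceHalf.mp ht']

theorem mulLeft_pow_succ_apply_mul_of_mem_peirce0 {s : J} (hs : s ∈ peirce0 e) (m : ℕ) (x : J) :
    (mulLeft e ^ (m + 1)) (s * x) = s * (mulLeft e ^ (m + 1)) (peirceProjHalf e x) := by
  conv_lhs => rw [← peirceProj1_add_peirceProjHalf_add_peirceProj0 (e := e) x]
  rw [mul_add, mul_add, mul_comm s (peirceProj1 e x),
    mul_eq_zero_of_mem_peirce1_of_mem_peirce0 h2 he (peirceProj1_mem h2 he x) hs, zero_add,
    map_add,
    mulLeft_pow_succ_apply_of_mem_peirce0 (mul_mem_peirce0 h2 he hs (peirceProj0_mem h2 he x)),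
    add_zero, mulLeft_pow_apply_mul_of_mem_peirce0 h2 he hs (peirceProjHalf_mem h2 he x)]

theorem peirceProjHalf_mul_mulLeft_pow_succ_apply {t : J} (ht : t ∈ peirceHalf e) (m : ℕ)
    (x : J) :
    peirceProjHalf e (t * (mulLeft e ^ (m + 1)) x) = t * peirceProj1 e x := by
  conv_lhs => rw [← peirceProj1_add_peirceProjHalf_add_peirceProj0 (e := e) x]
  have hu := peirceProj1_mem h2 he x
  rw [map_add, map_add, mulLeft_pow_apply_of_mem_peirce1 hu,
    mulLeft_pow_succ_apply_of_mem_peirce0 (peirceProj0_mem h2 he x), add_zero, mul_add, map_add,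
    peirceProjHalf_eq_self_of_mem_peirceHalf (mul_mem_peirceHalf_of_mem_peirce1 h2 he ht hu),
    peirceProjHalf_mul_eq_zero h2 he ht
      (mulLeft_pow_apply_mem_peirceHalf (peirceProjHalf_mem h2 he x) _), add_zero]

theorem peirceProjHalf_mulLeft_pow_apply_mul_mul {t s : J} (ht : t ∈ peirceHalf e)
    (hs : s ∈ peirce0 e) (m : ℕ) (x : J) :
    peirceProjHalf e ((mulLeft e ^ m) (t * (s * x))) =
      (mulLeft e ^ m) (t * (s * peirceProj0 e x)) := by
  conv_lhs => rw [← peirceProj1_add_peirceProjHalf_add_peirceProj0 (e := e) x]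
  rw [peirceProjHalf_mulLeft_pow_apply, mul_add s, mul_add s, mul_comm s (peirceProj1 e x),
    mul_eq_zero_of_mem_peirce1_of_mem_peirce0 h2 he (peirceProj1_mem h2 he x) hs, zero_add,
    mul_add t, map_add,
    peirceProjHalf_mul_eq_zero h2 he ht
      (mul_mem_peirceHalf_of_mem_peirce0 h2 he hs (peirceProjHalf_mem h2 he x)), zero_add,
    peirceProjHalf_eq_self_of_mem_peirceHalf (mul_mem_peirceHalf_of_mem_peirce0' h2 he ht
      (mul_mem_peirce0 h2 he hs (peirceProj0_mem h2 he x)))]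

end Jordan

end Peirce

-- For `k = 0` the truncated exponent `k - 1` is `0`: the third test is then `x ↦ t (s x)`.
inductive IsPeirceTest {J : Type*} [NonUnitalNonAssocSemiring J] (e : J) (k : ℕ) :
    AddMonoid.End J → Prop
  | one : IsPeirceTest e k 1
  | mulLeft_mul_pow {t : J} : t ∈ peirceHalf e →
      IsPeirceTest e k (mulLeft t * mulLeft e ^ (2 * k + 1))
  | pow_mul_mulLeft_mul_mulLeft {t s : J} : t ∈ peirceHalf e → s ∈ peirce0 e →
      IsPeirceTest e k (mulLeft e ^ (k - 1) * mulLeft t * mulLeft s)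

section RightNormed

variable {R : Type*} [NonUnitalNonAssocSemiring R]

theorem rnm_cons_of_ne_nil (x : R) {l : List R} (hl : l ≠ []) : rnm (x :: l) = x * rnm l := by
  obtain ⟨y, l, rfl⟩ := List.exists_cons_of_ne_nil hl
  rfl

theorem rnm_append_singleton (p : List R) (x : R) : rnm (p ++ [x]) = (p.map mulLeft).prod x := by
  induction p with
  | nil => rfl
  | cons a p ih =>
    rw [List.cons_append, rnm_cons_of_ne_nil _ (by simp), ih, List.map_cons, List.prod_cons]
    rfl

end RightNormed

def PreservesSums {J J' : Type*} [Add J'] (φ : J → J') (T : J → J) : Prop :=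
  ∀ ⦃c a b : J⦄, φ c = φ a + φ b → φ (T c) = φ (T a) + φ (T b)

theorem PreservesSums.comp {J J' : Type*} [Add J'] {φ : J → J'} {T S : J → J}
    (hT : PreservesSums φ T) (hS : PreservesSums φ S) : PreservesSums φ (T ∘ S) :=
  fun _ _ _ h => hT (hS h)

namespace IsNMulMap

variable {J J' : Type*} [NonUnitalNonAssocSemiring J] [NonUnitalNonAssocSemiring J'] {φ : J → J'}

theorem preservesSums_prod_map_mulLeft {n : ℕ} (hφ : IsNMulMap n φ) {p : List J}
    (hp : p.length + 1 = n) : PreservesSums φ (p.map mulLeft).prod := by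
  intro c a b h
  have hl : ∀ x, (p ++ [x]).length = n := by simp [hp]
  rw [← rnm_append_singleton, ← rnm_append_singleton, ← rnm_append_singleton, hφ _ (hl c),
    hφ _ (hl a), hφ _ (hl b)]
  simp only [List.map_append, List.map_cons, List.map_nil, rnm_append_singleton, h, map_add]

variable {k : ℕ} (hφ : IsNMulMap (k + 2) φ)
include hφ

theorem map_zero (hsurj : Function.Surjective φ) : φ 0 = 0 := by
  obtain ⟨z, hz⟩ := hsurj 0
  have h := hφ (List.replicate (k + 1) z ++ [0]) (by simp)
  rw [List.map_append, List.map_replicate, List.map_singleton, hz, rnm_append_singleton,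
    rnm_append_singleton] at h
  simpa using h

theorem preservesSums_mulLeft_pow_mul_mulLeft (a s : J) :
    PreservesSums φ ⇑(mulLeft a ^ k * mulLeft s) := by
  have h := hφ.preservesSums_prod_map_mulLeft (p := List.replicate k a ++ [s]) (by simp)
  rwa [List.map_append, List.map_replicate, List.prod_append, List.prod_replicate,
    List.map_singleton, List.prod_singleton] at h

theorem preservesSums_mul_mulLeft_pow (t a : J) :
    PreservesSums φ fun x => t * (mulLeft a ^ k) x := by
  have h := hφ.preservesSums_prod_map_mulLeft (p := t :: List.replicate k a) (by simp)
  rwa [List.map_cons, List.map_replicate, List.prod_cons, List.prod_replicate] at h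

theorem preservesSums_mulLeft_pow (a : J) : PreservesSums φ ⇑(mulLeft a ^ (k + 1)) := by
  have h := hφ.preservesSums_prod_map_mulLeft (p := List.replicate (k + 1) a) (by simp)
  rwa [List.map_replicate, List.prod_replicate] at h

theorem preservesSums_mulLeft_pow_two_mul_add_one_mul (a s : J) :
    PreservesSums φ fun x => (mulLeft a ^ (2 * k + 1)) (s * x) := by
  rw [show 2 * k + 1 = (k + 1) + k by ring, pow_add]
  exact (hφ.preservesSums_mulLeft_pow a).comp (hφ.preservesSums_mulLeft_pow_mul_mulLeft a s)

end IsNMulMap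

theorem IsPeirceTest.preservesSums {J J' : Type*} [NonUnitalNonAssocSemiring J]
    [NonUnitalNonAssocSemiring J'] {e : J} {k : ℕ} {T : AddMonoid.End J} (hT : IsPeirceTest e k T)
    {φ : J → J'} (hφ : IsNMulMap (k + 2) φ) : PreservesSums φ T := by
  cases hT with
  | one => exact fun _ _ _ h => h
  | @mulLeft_mul_pow t _ =>
    rw [show 2 * k + 1 = k + (k + 1) by ring, pow_add, ← mul_assoc]
    exact (hφ.preservesSums_mul_mulLeft_pow t e).comp (hφ.preservesSums_mulLeft_pow e)
  | @pow_mul_mulLeft_mul_mulLeft t s _ _ =>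
    rcases k with _ | m
    · exact (hφ.preservesSums_mul_mulLeft_pow t e).comp
        (hφ.preservesSums_mulLeft_pow_mul_mulLeft e s)
    · have h := hφ.preservesSums_prod_map_mulLeft (p := List.replicate m e ++ [t, s]) (by simp)
      rw [List.map_append, List.map_replicate, List.prod_append, List.prod_replicate] at h
      exact h

section Additivity

variable {J J' : Type*} [NonUnitalNonAssocCommRing J] [IsCommJordan J]
  [NonUnitalNonAssocCommRing J'] (h2 : ∀ x : J, x + x = 0 → x = 0) {e : J}
  (he : IsIdempotentElem e)
  (hcond1 : ∀ a ∈ peirce1 e, (∀ t ∈ peirceHalf e, t * a = 0) → a = 0)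
  (hcond1' : ∀ a ∈ peirce0 e, (∀ t ∈ peirceHalf e, t * a = 0) → a = 0)
  (hcond2 : ∀ a ∈ peirce0 e, (∀ t ∈ peirce0 e, t * a = 0) → a = 0)
  (hcond3 : ∀ a ∈ peirceHalf e, (∀ t ∈ peirce0 e, t * a = 0) → a = 0)
  {k : ℕ} {φ : J → J'} (hφ : IsNMulMap (k + 2) φ) (hinj : Function.Injective φ)
  (hsurj : Function.Surjective φ)

include h2 he hcond1 hcond1' hcond2 in
theorem eq_zero_of_forall_isPeirceTest {d : J}
    (h : ∀ T, IsPeirceTest e k T → peirceProjHalf e (T d) = 0) : d = 0 := by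
  have hh : peirceProjHalf e d = 0 := h 1 .one
  have h1 : peirceProj1 e d = 0 := hcond1 _ (peirceProj1_mem h2 he d) fun t ht =>
    (peirceProjHalf_mul_mulLeft_pow_succ_apply h2 he ht (2 * k) d).symm.trans
      (h _ (.mulLeft_mul_pow ht))
  have h0 : peirceProj0 e d = 0 := by
    have hw := peirceProj0_mem h2 he d
    refine hcond2 _ hw fun s hs => hcond1' _ (mul_mem_peirce0 h2 he hs hw) fun t ht => ?_
    refine eq_zero_of_mulLeft_pow_apply_eq_zero (m := k - 1)
      (mul_mem_peirceHalf_of_mem_peirce0' h2 he ht (mul_mem_peirce0 h2 he hs hw)) ?_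
    exact (peirceProjHalf_mulLeft_pow_apply_mul_mul h2 he ht hs (k - 1) d).symm.trans
      (h _ (.pow_mul_mulLeft_mul_mulLeft ht hs))
  rw [← peirceProj1_add_peirceProjHalf_add_peirceProj0 (e := e) d, h1, hh, h0, add_zero, add_zero]

include h2 he hcond3 hφ hinj in
theorem peirceProjHalf_sub_eq_zero_of_preservesSums {T : AddMonoid.End J}
    (hT : PreservesSums φ T) {c a b : J} (hc : φ c = φ a + φ b)
    (hadd : ∀ s ∈ peirce0 e,
      φ (s * (mulLeft e ^ (2 * k + 1)) (peirceProjHalf e (T a)) +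
          s * (mulLeft e ^ (2 * k + 1)) (peirceProjHalf e (T b))) =
        φ (s * (mulLeft e ^ (2 * k + 1)) (peirceProjHalf e (T a))) +
          φ (s * (mulLeft e ^ (2 * k + 1)) (peirceProjHalf e (T b)))) :
    peirceProjHalf e (T (c - (a + b))) = 0 := by
  have hd := peirceProjHalf_mem h2 he (T (c - (a + b)))
  refine eq_zero_of_mulLeft_pow_apply_eq_zero hd
    (hcond3 _ (mulLeft_pow_apply_mem_peirceHalf hd (2 * k + 1)) fun s hs => ?_)
  have h := (hφ.preservesSums_mulLeft_pow_two_mul_add_one_mul e s).comp hT hc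
  simp only [Function.comp_apply] at h
  rw [mulLeft_pow_succ_apply_mul_of_mem_peirce0 h2 he hs,
    mulLeft_pow_succ_apply_mul_of_mem_peirce0 h2 he hs,
    mulLeft_pow_succ_apply_mul_of_mem_peirce0 h2 he hs, ← hadd s hs] at h
  rw [map_sub, map_add, map_sub, map_add, map_sub, map_add, mul_sub, mul_add, hinj h, sub_self]

include h2 he hcond1 hcond1' hcond2 hcond3 hφ hinj in
theorem eq_add_of_map_eq_add {c a b : J} (hc : φ c = φ a + φ b)
    (hadd : ∀ T, IsPeirceTest e k T → ∀ s ∈ peirce0 e,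
      φ (s * (mulLeft e ^ (2 * k + 1)) (peirceProjHalf e (T a)) +
          s * (mulLeft e ^ (2 * k + 1)) (peirceProjHalf e (T b))) =
        φ (s * (mulLeft e ^ (2 * k + 1)) (peirceProjHalf e (T a))) +
          φ (s * (mulLeft e ^ (2 * k + 1)) (peirceProjHalf e (T b)))) :
    c = a + b :=
  sub_eq_zero.mp <| eq_zero_of_forall_isPeirceTest h2 he hcond1 hcond1' hcond2 fun T hT =>
    peirceProjHalf_sub_eq_zero_of_preservesSums h2 he hcond3 hφ hinj (hT.preservesSums hφ) hc
      (hadd T hT)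

include h2 he hcond1 hcond1' hcond2 hcond3 hφ hinj hsurj in
theorem map_add_of_peirceProj_disjoint {a b : J}
    (h1 : peirceProj1 e a = 0 ∨ peirceProj1 e b = 0)
    (hh : peirceProjHalf e a = 0 ∨ peirceProjHalf e b = 0)
    (h0 : peirceProj0 e a = 0 ∨ peirceProj0 e b = 0) : φ (a + b) = φ a + φ b := by
  obtain ⟨c, hc⟩ := hsurj (φ a + φ b)
  rw [← eq_add_of_map_eq_add h2 he hcond1 hcond1' hcond2 hcond3 hφ hinj hc ?_, hc]
  intro T hT s _
  have hzero : peirceProjHalf e (T a) = 0 ∨ peirceProjHalf e (T b) = 0 := by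
    cases hT with
    | one => exact hh
    | @mulLeft_mul_pow t ht =>
      change peirceProjHalf e (t * (mulLeft e ^ (2 * k + 1)) a) = 0 ∨
        peirceProjHalf e (t * (mulLeft e ^ (2 * k + 1)) b) = 0
      rw [peirceProjHalf_mul_mulLeft_pow_succ_apply h2 he ht,
        peirceProjHalf_mul_mulLeft_pow_succ_apply h2 he ht]
      rcases h1 with h | h <;> simp [h]
    | @pow_mul_mulLeft_mul_mulLeft t s' ht hs' =>
      change peirceProjHalf e ((mulLeft e ^ (k - 1)) (t * (s' * a))) = 0 ∨
        peirceProjHalf e ((mulLeft e ^ (k - 1)) (t * (s' * b))) = 0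
      rw [peirceProjHalf_mulLeft_pow_apply_mul_mul h2 he ht hs',
        peirceProjHalf_mulLeft_pow_apply_mul_mul h2 he ht hs']
      rcases h0 with h | h <;> simp [h]
  rcases hzero with h | h <;> simp [h, hφ.map_zero hsurj]

include h2 he hcond1 hcond1' hcond2 hcond3 hφ hinj hsurj in
theorem map_mul_add_mul {s γ δ : J} (hs : s ∈ peirce0 e) (hγ : γ ∈ peirceHalf e)
    (hδ : δ ∈ peirceHalf e) : φ (s * γ + s * δ) = φ (s * γ) + φ (s * δ) := by
  set ξ := 2 ^ (2 * k + 2) • γ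
  set η := 2 ^ (3 * k + 2) • δ
  have hξ : ξ ∈ peirceHalf e := nsmul_mem_peirceHalf hγ _
  have hη : η ∈ peirceHalf e := nsmul_mem_peirceHalf hδ _
  have he1 : e ∈ peirce1 e := he
  have hsplit : φ (e + η) = φ e + φ η :=
    map_add_of_peirceProj_disjoint h2 he hcond1 hcond1' hcond2 hcond3 hφ hinj hsurj
      (.inr (peirceProj1_eq_zero_of_mem_peirceHalf hη))
      (.inl (peirceProjHalf_eq_zero_of_mem_peirce1 he1))
      (.inl (peirceProj0_eq_zero_of_mem_peirce1 he1))
  have hT := (hφ.preservesSums_mulLeft_pow_two_mul_add_one_mul e s).comp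
    (hφ.preservesSums_mul_mulLeft_pow (ξ + e) e) hsplit
  have hTe : (mulLeft e ^ (2 * k + 1)) (s * ((ξ + e) * (mulLeft e ^ k) e)) = s * γ := by
    rw [mulLeft_pow_succ_apply_mul_of_mem_peirce0 h2 he hs, mulLeft_pow_apply_of_mem_peirce1 he1,
      add_mul, he.eq, mul_comm ξ e, map_add, peirceProjHalf_eq_zero_of_mem_peirce1 he1, add_zero,
      peirceProjHalf_eq_self_of_mem_peirceHalf (self_mul_mem_peirceHalf hξ),
      ← mulLeft_pow_succ_apply, mulLeft_pow_apply_two_pow_nsmul hγ]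
  have hTη : (mulLeft e ^ (2 * k + 1)) (s * ((ξ + e) * (mulLeft e ^ k) η)) = s * δ := by
    rw [mulLeft_pow_succ_apply_mul_of_mem_peirce0 h2 he hs, add_mul, ← mulLeft_pow_succ_apply',
      map_add, peirceProjHalf_mul_eq_zero h2 he hξ (mulLeft_pow_apply_mem_peirceHalf hη k), zero_add,
      peirceProjHalf_eq_self_of_mem_peirceHalf (mulLeft_pow_apply_mem_peirceHalf hη _),
      mulLeft_pow_apply_mulLeft_pow_apply, show 2 * k + 1 + (k + 1) = 3 * k + 2 by ring,
      mulLeft_pow_apply_two_pow_nsmul hδ]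
  simp only [Function.comp_apply] at hT
  rwa [map_add, mul_add, mul_add, map_add, hTe, hTη] at hT

end Additivity

theorem nMulIso_additive_general {J J' : Type*} [NonUnitalNonAssocCommRing J] [NonUnitalNonAssocCommRing J']
    (hJordan : ∀ x y : J, ((x * x) * y) * x = (x * x) * (y * x))
    (h2 : ∀ x : J, x + x = 0 → x = 0)
    (e : J) (hid : e * e = e)
    (hcond1 : ∀ a ∈ peirce1 e, (∀ t ∈ peirceHalf e, t * a = 0) → a = 0)
    (hcond1' : ∀ a ∈ peirce0 e, (∀ t ∈ peirceHalf e, t * a = 0) → a = 0)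
    (hcond2 : ∀ a ∈ peirce0 e, (∀ t ∈ peirce0 e, t * a = 0) → a = 0)
    (hcond3 : ∀ a ∈ peirceHalf e, (∀ t ∈ peirce0 e, t * a = 0) → a = 0)
    (n : ℕ) (hn : 2 ≤ n) (φ : J → J')
    (hbij : Function.Bijective φ) (hmul : IsNMulMap n φ) :
    ∀ a b : J, φ (a + b) = φ a + φ b := by
  have : IsCommJordan J := isCommJordan_of_jordan_identity hJordan
  obtain ⟨k, rfl⟩ : ∃ k, n = k + 2 := ⟨n - 2, by omega⟩
  intro a b
  obtain ⟨c, hc⟩ := hbij.2 (φ a + φ b)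
  have hmem (x : J) : (mulLeft e ^ (2 * k + 1)) (peirceProjHalf e x) ∈ peirceHalf e :=
    mulLeft_pow_apply_mem_peirceHalf (peirceProjHalf_mem h2 hid x) _
  rw [← eq_add_of_map_eq_add h2 hid hcond1 hcond1' hcond2 hcond3 hmul hbij.1 hc fun T _ s hs =>
    map_mul_add_mul h2 hid hcond1 hcond1' hcond2 hcond3 hmul hbij.1 hbij.2 hs (hmem _) (hmem _), hc]

theorem nMulIso_additive {J J' : Type*} [NonUnitalNonAssocCommRing J] [NonUnitalNonAssocCommRing J']
    (hJordan : ∀ x y : J, ((x * x) * y) * x = (x * x) * (y * x))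
    (hJordan' : ∀ x y : J', ((x * x) * y) * x = (x * x) * (y * x))
    (h2 : ∀ x : J, x + x = 0 → x = 0)
    (e : J) (hid : e * e = e) (hne : e ≠ 0) (hnu : ∃ x : J, e * x ≠ x)
    (hcond1 : ∀ a ∈ peirce1 e, (∀ t ∈ peirceHalf e, t * a = 0) → a = 0)
    (hcond1' : ∀ a ∈ peirce0 e, (∀ t ∈ peirceHalf e, t * a = 0) → a = 0)
    (hcond2 : ∀ a ∈ peirce0 e, (∀ t ∈ peirce0 e, t * a = 0) → a = 0)
    (hcond3 : ∀ a ∈ peirceHalf e, (∀ t ∈ peirce0 e, t * a = 0) → a = 0)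
    (n : ℕ) (hn : 2 ≤ n) (φ : J → J')
    (hbij : Function.Bijective φ) (hmul : IsNMulMap n φ) :
    ∀ a b : J, φ (a + b) = φ a + φ b :=
  nMulIso_additive_general hJordan h2 e hid hcond1 hcond1' hcond2 hcond3 n hn φ hbij hmul
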